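/- Let A ∈ ℂ^{n×n}, H ∈ ℂ^{N×N}, W ∈ ℂ^{n×N}, u_0 ∈ ℂ^n, and let g : ℝ → ℂ^n be continuous. Let u : [0,t] → ℂ^n be differentiable with u'(s) = A u(s) + g(s) for all s ∈ [0,t] and u(0) = u_0. Let A_N be the (n+N)×(n+N) block upper-triangular matrix with blocks [[A, W],[0, H]], and define u_N(t) := [I_n 0] exp(t A_N) (u_0; e_1) (the first n entries of exp(t A_N) applied to the vector stacking u_0 and e_1 ∈ ℂ^N). Then ‖u(t) − u_N(t)‖ ≤ ∫_0^t ‖exp((t−s)A)‖ · ‖g(s) − W exp(sH) e_1‖ ds. -/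

import Mathlib

open scoped Matrix.Norms.L2Operator

/-- The first standard basis vector of `ℂ^N`. -/
noncomputable def e1C (N : ℕ) : Fin N → ℂ := fun j => if (j : ℕ) = 0 then 1 else 0

/-- The Euclidean norm of a vector in `ℂ^n`. -/
noncomputable def cnorm {n : ℕ} (v : Fin n → ℂ) : ℝ :=
  ‖(WithLp.equiv 2 (Fin n → ℂ)).symm v‖

/-!
Let `y(s) = exp(s A_N) (u₀; e₁)`. Its bottom block solves `z' = H z`, hence equals
`exp(s H) e₁`, so its top block `y₁` solves `y₁' = A y₁ + W exp(s H) e₁` with `y₁(0) = u₀`.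
The error `e = u - y₁` then solves `e' = A e + (g - W exp(s H) e₁)` with `e(0) = 0`, and
Duhamel's formula gives `e(t) = ∫₀ᵗ exp((t-s)A) (g(s) - W exp(s H) e₁) ds`; the bound follows
by taking norms under the integral.
-/

open NormedSpace Set Matrix

section

variable {l m p : Type*} [Fintype l] [Fintype m] [DecidableEq m] [Fintype p] [DecidableEq p]

theorem HasDerivAt.matrix_mulVec {B : ℝ → Matrix l m ℂ} {v : ℝ → m → ℂ}
    {B' : Matrix l m ℂ} {v' : m → ℂ} {x : ℝ} (hB : HasDerivAt B B' x)
    (hv : HasDerivAt v v' x) :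
    HasDerivAt (fun s => B s *ᵥ v s) (B x *ᵥ v' + B' *ᵥ v x) x := by
  have hbil : IsBilinearMap ℝ fun (M : Matrix l m ℂ) (w : m → ℂ) => M *ᵥ w :=
    { add_left := fun _ _ _ => add_mulVec _ _ _
      smul_left := fun _ _ _ => smul_mulVec _ _ _
      add_right := fun _ _ _ => mulVec_add _ _ _
      smul_right := fun _ _ _ => mulVec_smul _ _ _ }
  simpa using (hbil.toContinuousBilinearMap.hasFDerivAt_of_bilinear hB.hasFDerivAt
    hv.hasFDerivAt).hasDerivAt

namespace Matrix

theorem continuous_exp_smul (M : Matrix m m ℂ) : Continuous fun s : ℝ => exp (s • M) :=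
  continuous_iff_continuousAt.2 fun s => (hasDerivAt_exp_smul_const M s).continuousAt

theorem hasDerivAt_exp_smul_mulVec (M : Matrix m m ℂ) (c : m → ℂ) (s : ℝ) :
    HasDerivAt (fun r : ℝ => exp (r • M) *ᵥ c) (M *ᵥ (exp (s • M) *ᵥ c)) s := by
  simpa [mulVec_mulVec] using
    (hasDerivAt_exp_smul_const' M s).matrix_mulVec (hasDerivAt_const s c)

theorem eq_exp_smul_mulVec_add_integral (A : Matrix m m ℂ) {u f : ℝ → m → ℂ} {t : ℝ}
    (hf : Continuous f) (hu : ∀ s ∈ uIcc 0 t, HasDerivAt u (A *ᵥ u s + f s) s) :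
    u t = exp (t • A) *ᵥ u 0 + ∫ s in 0..t, exp ((t - s) • A) *ᵥ f s := by
  -- Duhamel: the `A`-terms cancel in the derivative of `s ↦ exp((t - s) A) u(s)`.
  have hφ : ∀ s ∈ uIcc 0 t, HasDerivAt (fun r => exp ((t - r) • A) *ᵥ u r)
      (exp ((t - s) • A) *ᵥ f s) s := by
    intro s hs
    have hexp : HasDerivAt (fun r : ℝ => exp ((t - r) • A)) (-(exp ((t - s) • A) * A)) s := by
      simpa [Function.comp_def] using
        (hasDerivAt_exp_smul_const A (t - s)).scomp s ((hasDerivAt_id s).const_sub t)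
    convert hexp.matrix_mulVec (hu s hs) using 1
    simp [mulVec_add, neg_mulVec, mulVec_mulVec]
  have hint : Continuous fun s => exp ((t - s) • A) *ᵥ f s :=
    ((continuous_exp_smul A).comp (continuous_sub_left t)).matrix_mulVec hf
  rw [intervalIntegral.integral_eq_sub_of_hasDerivAt hφ (hint.intervalIntegrable 0 t)]
  simp

theorem exp_smul_mulVec_of_hasDerivAt (M : Matrix m m ℂ) {z : ℝ → m → ℂ} {t : ℝ}
    (hz : ∀ s ∈ uIcc 0 t, HasDerivAt z (M *ᵥ z s) s) : z t = exp (t • M) *ᵥ z 0 := by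
  simpa using eq_exp_smul_mulVec_add_integral M continuous_const (f := 0) (by simpa using hz)

theorem exp_smul_fromBlocks_zero_mulVec_inr (A : Matrix m m ℂ) (W : Matrix m p ℂ)
    (H : Matrix p p ℂ) (v : m ⊕ p → ℂ) (t : ℝ) :
    (exp (t • fromBlocks A W 0 H) *ᵥ v) ∘ Sum.inr = exp (t • H) *ᵥ (v ∘ Sum.inr) := by
  have hbot : ∀ s ∈ uIcc 0 t,
      HasDerivAt (fun r : ℝ => (exp (r • fromBlocks A W 0 H) *ᵥ v) ∘ Sum.inr)
        (H *ᵥ ((exp (s • fromBlocks A W 0 H) *ᵥ v) ∘ Sum.inr)) s := fun s _ => by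
    refine hasDerivAt_pi.2 fun j => ?_
    have := hasDerivAt_pi.1 (hasDerivAt_exp_smul_mulVec (fromBlocks A W 0 H) v s) (Sum.inr j)
    rw [fromBlocks_mulVec] at this
    simpa using this
  simpa using exp_smul_mulVec_of_hasDerivAt H hbot

theorem hasDerivAt_exp_smul_fromBlocks_zero_mulVec_inl (A : Matrix m m ℂ) (W : Matrix m p ℂ)
    (H : Matrix p p ℂ) (v : m ⊕ p → ℂ) (s : ℝ) :
    HasDerivAt (fun r : ℝ => (exp (r • fromBlocks A W 0 H) *ᵥ v) ∘ Sum.inl)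
      (A *ᵥ ((exp (s • fromBlocks A W 0 H) *ᵥ v) ∘ Sum.inl) +
        W *ᵥ (exp (s • H) *ᵥ (v ∘ Sum.inr))) s := by
  refine hasDerivAt_pi.2 fun i => ?_
  have := hasDerivAt_pi.1 (hasDerivAt_exp_smul_mulVec (fromBlocks A W 0 H) v s) (Sum.inl i)
  rw [fromBlocks_mulVec, exp_smul_fromBlocks_zero_mulVec_inr] at this
  simpa using this

end Matrix

end

theorem cnorm_intervalIntegral_mulVec_le {k n : ℕ} {B : ℝ → Matrix (Fin k) (Fin n) ℂ}
    {f : ℝ → Fin n → ℂ} {a b : ℝ} (hB : Continuous B) (hf : Continuous f)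
    (hab : a ≤ b) :
    cnorm (∫ s in a..b, B s *ᵥ f s) ≤ ∫ s in a..b, ‖B s‖ * cnorm (f s) := by
  let L : (Fin k → ℂ) →L[ℝ] EuclideanSpace ℂ (Fin k) :=
    ((EuclideanSpace.equiv (Fin k) ℂ).symm.toContinuousLinearMap).restrictScalars ℝ
  have hbound : Continuous fun s => ‖B s‖ * cnorm (f s) :=
    hB.norm.mul ((PiLp.continuous_toLp 2 _).comp hf).norm
  calc cnorm (∫ s in a..b, B s *ᵥ f s) = ‖∫ s in a..b, L (B s *ᵥ f s)‖ := by
        rw [L.intervalIntegral_comp_comm ((hB.matrix_mulVec hf).intervalIntegrable a b)]; rfl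
    _ ≤ ∫ s in a..b, ‖B s‖ * cnorm (f s) :=
        intervalIntegral.norm_integral_le_of_norm_le hab
          (.of_forall fun s _ => l2_opNorm_mulVec (B s) _) (hbound.intervalIntegrable a b)

/-- Variation-of-constants truncation error bound: if `u' = A u + g` on `[0, t]` with
`u(0) = u₀`, `A_N = [[A, W], [0, H]]` and
`u_N(t) = [Iₙ 0] exp(t A_N) (u₀; e₁)`, then
`‖u(t) - u_N(t)‖ ≤ ∫₀ᵗ ‖exp((t-s)A)‖ ‖g(s) - W exp(sH) e₁‖ ds`. -/
theorem truncation_error_bound (n N : ℕ) (A : Matrix (Fin n) (Fin n) ℂ)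
    (H : Matrix (Fin N) (Fin N) ℂ) (W : Matrix (Fin n) (Fin N) ℂ)
    (u0 : Fin n → ℂ) (g : ℝ → Fin n → ℂ) (hg : Continuous g)
    (t : ℝ) (ht : 0 ≤ t) (u : ℝ → Fin n → ℂ)
    (hu : ∀ s ∈ Set.Icc (0 : ℝ) t, HasDerivAt u (A.mulVec (u s) + g s) s)
    (hu0 : u 0 = u0) :
    cnorm (u t - fun i =>
        (NormedSpace.exp (t • Matrix.fromBlocks A W 0 H)).mulVec
          (Sum.elim u0 (e1C N)) (Sum.inl i)) ≤
      ∫ s in (0 : ℝ)..t, ‖NormedSpace.exp ((t - s) • A)‖ *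
        cnorm (g s - W.mulVec ((NormedSpace.exp (s • H)).mulVec (e1C N))) := by
  set y : ℝ → Fin n → ℂ :=
    fun s => (exp (s • fromBlocks A W 0 H) *ᵥ Sum.elim u0 (e1C N)) ∘ Sum.inl
  set f : ℝ → Fin n → ℂ := fun s => g s - W *ᵥ (exp (s • H) *ᵥ e1C N)
  have hf : Continuous f :=
    hg.sub (continuous_const.matrix_mulVec ((continuous_exp_smul H).matrix_mulVec continuous_const))
  have herr : ∀ s ∈ uIcc 0 t, HasDerivAt (u - y) (A *ᵥ (u - y) s + f s) s := by
    intro s hs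
    rw [uIcc_of_le ht] at hs
    refine ((hu s hs).sub
      (hasDerivAt_exp_smul_fromBlocks_zero_mulVec_inl A W H _ s)).congr_deriv ?_
    simp only [Pi.sub_apply, mulVec_sub, Sum.elim_comp_inr, f, y]
    abel
  have herr0 : (u - y) 0 = 0 := by simp [y, hu0]
  have hduhamel := eq_exp_smul_mulVec_add_integral A hf herr
  rw [herr0, mulVec_zero, zero_add] at hduhamel
  show cnorm ((u - y) t) ≤ _
  rw [hduhamel]
  exact cnorm_intervalIntegral_mulVec_le
    ((continuous_exp_smul A).comp (continuous_sub_left t)) hf ht
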